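/- Let ω and μ be radial weights with ω ∈ D and μ ∈ D̂, and let 0 < p < ∞. Then the radial weight ν(r) := ω(r) μ̂(r)^p belongs to D. -/

import Mathlib

open MeasureTheory Set Filter
open scoped ENNReal

/-- The tail integral `ω̂(r) = ∫_r^1 ω(s) ds` of a radial weight. -/
noncomputable def wHat (ω : ℝ → ℝ) (r : ℝ) : ℝ := ∫ s in r..1, ω s

/-- The moment `ω_x = ∫_0^1 s^x ω(s) ds` of a radial weight. -/
noncomputable def wMom (ω : ℝ → ℝ) (x : ℝ) : ℝ := ∫ s in (0:ℝ)..1, s ^ x * ω s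

/-- A radial weight: nonnegative, integrable on `[0,1)`, with positive tail integrals. -/
def IsRadialWeight (ω : ℝ → ℝ) : Prop :=
  (∀ s ∈ Set.Ico (0:ℝ) 1, 0 ≤ ω s) ∧
    MeasureTheory.IntegrableOn ω (Set.Ico (0:ℝ) 1) ∧
    ∀ r ∈ Set.Ico (0:ℝ) 1, 0 < wHat ω r

/-- The class `D̂` of radial weights. -/
def Dhat (ω : ℝ → ℝ) : Prop :=
  ∃ C > (1:ℝ), ∀ r ∈ Set.Ico (0:ℝ) 1, wHat ω r ≤ C * wHat ω ((1 + r) / 2)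

/-- The class `Ď` of radial weights. -/
def Dcheck (ω : ℝ → ℝ) : Prop :=
  ∃ k > (1:ℝ), ∃ C > (1:ℝ), ∀ r ∈ Set.Ico (0:ℝ) 1,
    wHat ω r ≥ C * wHat ω (1 - (1 - r) / k)

/-- The class `D = D̂ ∩ Ď`. -/
def Dclass (ω : ℝ → ℝ) : Prop := Dhat ω ∧ Dcheck ω

/-- The class `M`: `ω_x ≥ C ω_{kx}` for all `x ≥ 1`. -/
def Mclass (ω : ℝ → ℝ) : Prop :=
  ∃ C > (1:ℝ), ∃ k > (1:ℝ), ∀ x : ℝ, 1 ≤ x → wMom ω x ≥ C * wMom ω (k * x)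

/-- The fractional derivative `D^μ f(z) = Σ (f̂(n)/μ_{2n+1}) zⁿ` induced by a radial
weight `μ`, acting on the Taylor coefficients `a` of `f`. -/
noncomputable def Dfrac (μ : ℝ → ℝ) (a : ℕ → ℂ) (z : ℂ) : ℂ :=
  ∑' n : ℕ, (a n / ((wMom μ (2 * (n : ℝ) + 1) : ℝ) : ℂ)) * z ^ n

/-- `∫_𝔻 |f(z)|^p w(|z|) dA(z)` as a Lebesgue integral (up to the normalization `1/π`). -/
noncomputable def discLInt (p : ℝ) (w : ℝ → ℝ) (f : ℂ → ℂ) : ℝ≥0∞ :=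
  ∫⁻ z in Metric.ball (0:ℂ) 1, ENNReal.ofReal (‖f z‖ ^ p * w ‖z‖)

/-! Write `ν = ω g` with `g = μ̂ ^ p`, which is nonincreasing on `[0, 1]`. Then for `a ≤ b`,
`ν̂(a) ≤ g(a) ω̂(a)` and `ν̂(a) ≥ g(b) (ω̂(a) - ω̂(b))`. Iterating the Ď condition of `ω` makes
its constant `C > 2`, so at `t = 1 - (1 - r) / k` the second bound gives
`(C - 1) g(t) ω̂(r) ≤ C ν̂(r)`: the tail of `ν` is comparable to `g(t) ω̂(r)`. Since `g` is
nonincreasing this yields Ď for `ν` at once. For D̂, the condition `μ ∈ D̂` iterates to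
`μ̂(r) ≲ μ̂(1 - (1 - r) / K)` for every fixed `K`, which combined with `ω ∈ D̂` bounds
`ν̂(r)` by `ν̂((1 + r) / 2)`. -/

section TailIntegral

variable {w : ℝ → ℝ}

lemma ae_restrict_Icc_zero_one_nonneg (hw0 : ∀ s ∈ Ico (0:ℝ) 1, 0 ≤ w s) :
    ∀ᵐ s ∂volume.restrict (Icc (0:ℝ) 1), 0 ≤ w s := by
  rw [← Measure.restrict_congr_set Ico_ae_eq_Icc]
  exact (ae_restrict_iff' measurableSet_Ico).2 (ae_of_all _ hw0)

lemma intervalIntegrable_of_integrableOn_Ico (hwi : IntegrableOn w (Ico 0 1)) {a b : ℝ}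
    (ha : a ∈ Icc (0:ℝ) 1) (hb : b ∈ Icc (0:ℝ) 1) : IntervalIntegrable w volume a b :=
  ((hwi.congr_set_ae Ico_ae_eq_Icc.symm).mono_set (uIcc_subset_Icc ha hb)).intervalIntegrable

lemma wHat_sub_wHat (hwi : IntegrableOn w (Ico 0 1)) {a b : ℝ}
    (ha : a ∈ Icc (0:ℝ) 1) (hb : b ∈ Icc (0:ℝ) 1) :
    wHat w a - wHat w b = ∫ s in a..b, w s :=
  sub_eq_of_eq_add (intervalIntegral.integral_add_adjacent_intervals
    (intervalIntegrable_of_integrableOn_Ico hwi ha hb)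
    (intervalIntegrable_of_integrableOn_Ico hwi hb (right_mem_Icc.2 zero_le_one))).symm

lemma antitoneOn_wHat (hw0 : ∀ s ∈ Ico (0:ℝ) 1, 0 ≤ w s) (hwi : IntegrableOn w (Ico 0 1)) :
    AntitoneOn (wHat w) (Icc 0 1) := fun a ha b hb hab => by
  rw [← sub_nonneg, wHat_sub_wHat hwi ha hb]
  exact intervalIntegral.integral_nonneg_of_ae_restrict hab
    (ae_restrict_of_ae_restrict_of_subset (Icc_subset_Icc ha.1 hb.2)
      (ae_restrict_Icc_zero_one_nonneg hw0))

lemma wHat_nonneg (hw0 : ∀ s ∈ Ico (0:ℝ) 1, 0 ≤ w s) (hwi : IntegrableOn w (Ico 0 1))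
    {a : ℝ} (ha : a ∈ Icc (0:ℝ) 1) : 0 ≤ wHat w a := by
  simpa [wHat] using antitoneOn_wHat hw0 hwi ha (right_mem_Icc.2 zero_le_one) ha.2

end TailIntegral

section OneSubDiv

variable {r K K' : ℝ}

lemma le_one_sub_div (hr : r ≤ 1) (hK : 1 ≤ K) : r ≤ 1 - (1 - r) / K := by
  have := div_le_self (sub_nonneg.2 hr) hK
  linarith

lemma one_sub_div_lt_one (hr : r < 1) (hK : 0 < K) : 1 - (1 - r) / K < 1 := by
  have := div_pos (sub_pos.2 hr) hK
  linarith

lemma one_sub_div_mem_Ico (hr : r ∈ Ico (0:ℝ) 1) (hK : 1 ≤ K) : 1 - (1 - r) / K ∈ Ico (0:ℝ) 1 :=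
  ⟨hr.1.trans (le_one_sub_div hr.2.le hK), one_sub_div_lt_one hr.2 (by linarith)⟩

lemma one_sub_div_le_one_sub_div (hr : r ≤ 1) (hK : 0 < K) (hKK' : K ≤ K') :
    1 - (1 - r) / K ≤ 1 - (1 - r) / K' := by
  have := div_le_div_of_nonneg_left (sub_nonneg.2 hr) hK hKK'
  linarith

lemma le_pow_mul_one_sub_div_pow {f : ℝ → ℝ} {C : ℝ} (hC : 0 ≤ C) (hK : 1 ≤ K)
    (h : ∀ r ∈ Ico (0:ℝ) 1, f r ≤ C * f (1 - (1 - r) / K)) (n : ℕ) (hr : r ∈ Ico (0:ℝ) 1) :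
    f r ≤ C ^ n * f (1 - (1 - r) / K ^ n) := by
  induction n with
  | zero => simp
  | succ n ih =>
    have hstep := h (1 - (1 - r) / K ^ n) (one_sub_div_mem_Ico hr (one_le_pow₀ hK))
    rw [sub_sub_cancel, div_div, ← pow_succ] at hstep
    calc f r ≤ C ^ n * f (1 - (1 - r) / K ^ n) := ih
      _ ≤ C ^ n * (C * f (1 - (1 - r) / K ^ (n + 1))) :=
        mul_le_mul_of_nonneg_left hstep (pow_nonneg hC n)
      _ = C ^ (n + 1) * f (1 - (1 - r) / K ^ (n + 1)) := by ring

end OneSubDiv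

/-- For `g = wHat μ` this is equivalent to `μ ∈ D̂`. -/
def IsDoublingNearOne (g : ℝ → ℝ) : Prop :=
  ∀ K ≥ (1:ℝ), ∃ B ≥ (1:ℝ), ∀ r ∈ Ico (0:ℝ) 1, g r ≤ B * g (1 - (1 - r) / K)

lemma Dhat.isDoublingNearOne_wHat {μ : ℝ → ℝ} (hμ0 : ∀ s ∈ Ico (0:ℝ) 1, 0 ≤ μ s)
    (hμi : IntegrableOn μ (Ico 0 1)) (hμ : Dhat μ) : IsDoublingNearOne (wHat μ) := by
  obtain ⟨C, hC, hμC⟩ := hμ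
  intro K hK
  obtain ⟨n, hn⟩ := pow_unbounded_of_one_lt K one_lt_two
  refine ⟨C ^ n, one_le_pow₀ hC.le, fun r hr => ?_⟩
  have hhalf : ∀ r ∈ Ico (0:ℝ) 1, wHat μ r ≤ C * wHat μ (1 - (1 - r) / 2) := fun r hr => by
    convert hμC r hr using 3
    ring
  have hK_mem := one_sub_div_mem_Ico hr hK
  have h2n_mem := one_sub_div_mem_Ico hr (one_le_pow₀ (one_le_two : (1:ℝ) ≤ 2) (n := n))
  calc wHat μ r ≤ C ^ n * wHat μ (1 - (1 - r) / 2 ^ n) :=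
        le_pow_mul_one_sub_div_pow (by linarith) one_le_two hhalf n hr
    _ ≤ C ^ n * wHat μ (1 - (1 - r) / K) := by
        gcongr
        exact antitoneOn_wHat hμ0 hμi (Ico_subset_Icc_self hK_mem)
          (Ico_subset_Icc_self h2n_mem) (one_sub_div_le_one_sub_div hr.2.le (by linarith) hn.le)

lemma IsDoublingNearOne.rpow {g : ℝ → ℝ} (hg : IsDoublingNearOne g)
    (hg0 : ∀ r ∈ Ico (0:ℝ) 1, 0 ≤ g r) {p : ℝ} (hp : 0 ≤ p) :
    IsDoublingNearOne (fun r => g r ^ p) := by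
  intro K hK
  obtain ⟨B, hB, hgB⟩ := hg K hK
  refine ⟨B ^ p, Real.one_le_rpow hB hp, fun r hr => ?_⟩
  rw [← Real.mul_rpow (by linarith) (hg0 _ (one_sub_div_mem_Ico hr hK))]
  exact Real.rpow_le_rpow (hg0 r hr) (hgB r hr) hp

lemma Dcheck.exists_two_lt {ω : ℝ → ℝ} (hω : Dcheck ω) :
    ∃ k > (1:ℝ), ∃ C > (2:ℝ), ∀ r ∈ Ico (0:ℝ) 1, wHat ω r ≥ C * wHat ω (1 - (1 - r) / k) := by
  obtain ⟨k, hk, C, hC, hωC⟩ := hω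
  obtain ⟨n, hn⟩ := pow_unbounded_of_one_lt 2 hC
  have hn0 : n ≠ 0 := by
    rintro rfl
    norm_num at hn
  refine ⟨k ^ n, one_lt_pow₀ hk hn0, C ^ n, hn, fun r hr => ?_⟩
  -- the Ď inequality for `ω` is the D̂-type inequality for `-wHat ω`
  have := le_pow_mul_one_sub_div_pow (f := fun r => -wHat ω r) (C := C) (by positivity) hk.le
    (fun r hr => by linarith [hωC r hr]) n hr
  rwa [mul_neg, neg_le_neg_iff] at this

section AntitoneMultiplier

variable {ω g : ℝ → ℝ}

lemma integrableOn_mul_of_antitoneOn (hωi : IntegrableOn ω (Ico 0 1))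
    (hg : AntitoneOn g (Icc 0 1)) : IntegrableOn (fun s => ω s * g s) (Ico 0 1) := by
  refine hωi.mul_bdd (c := max |g 1| |g 0|)
    (aemeasurable_restrict_of_antitoneOn measurableSet_Ico
      (hg.mono Ico_subset_Icc_self)).aestronglyMeasurable
    ((ae_restrict_iff' measurableSet_Ico).2 (ae_of_all _ fun s hs => ?_))
  have hs' := Ico_subset_Icc_self hs
  exact abs_le_max_abs_abs (hg hs' (right_mem_Icc.2 zero_le_one) hs'.2)
    (hg (left_mem_Icc.2 zero_le_one) hs' hs'.1)

lemma wHat_mul_le (hω0 : ∀ s ∈ Ico (0:ℝ) 1, 0 ≤ ω s) (hωi : IntegrableOn ω (Ico 0 1))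
    (hg : AntitoneOn g (Icc 0 1)) {a : ℝ} (ha : a ∈ Icc (0:ℝ) 1) :
    wHat (fun s => ω s * g s) a ≤ g a * wHat ω a := by
  have h1 : (1:ℝ) ∈ Icc 0 1 := right_mem_Icc.2 zero_le_one
  rw [wHat, wHat, ← intervalIntegral.integral_const_mul]
  refine intervalIntegral.integral_mono_ae_restrict ha.2
    (intervalIntegrable_of_integrableOn_Ico (integrableOn_mul_of_antitoneOn hωi hg) ha h1)
    ((intervalIntegrable_of_integrableOn_Ico hωi ha h1).const_mul _) ?_
  filter_upwards [ae_restrict_mem measurableSet_Icc, ae_restrict_of_ae_restrict_of_subset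
    (Icc_subset_Icc_left ha.1) (ae_restrict_Icc_zero_one_nonneg hω0)] with s hs hs0
  rw [mul_comm (g a)]
  exact mul_le_mul_of_nonneg_left (hg ha ⟨ha.1.trans hs.1, hs.2⟩ hs.1) hs0

lemma mul_wHat_sub_le_wHat_mul (hω0 : ∀ s ∈ Ico (0:ℝ) 1, 0 ≤ ω s)
    (hωi : IntegrableOn ω (Ico 0 1)) (hg : AntitoneOn g (Icc 0 1))
    (hg0 : ∀ s ∈ Icc (0:ℝ) 1, 0 ≤ g s) {a b : ℝ} (ha : a ∈ Icc (0:ℝ) 1) (hb : b ∈ Icc (0:ℝ) 1)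
    (hab : a ≤ b) : g b * (wHat ω a - wHat ω b) ≤ wHat (fun s => ω s * g s) a := by
  have hνi := integrableOn_mul_of_antitoneOn hωi hg
  have hν0 : ∀ s ∈ Ico (0:ℝ) 1, 0 ≤ ω s * g s := fun s hs =>
    mul_nonneg (hω0 s hs) (hg0 s (Ico_subset_Icc_self hs))
  rw [wHat_sub_wHat hωi ha hb, ← intervalIntegral.integral_const_mul]
  calc ∫ s in a..b, g b * ω s ≤ ∫ s in a..b, ω s * g s := by
        refine intervalIntegral.integral_mono_ae_restrict hab
          ((intervalIntegrable_of_integrableOn_Ico hωi ha hb).const_mul _)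
          (intervalIntegrable_of_integrableOn_Ico hνi ha hb) ?_
        filter_upwards [ae_restrict_mem measurableSet_Icc, ae_restrict_of_ae_restrict_of_subset
          (Icc_subset_Icc ha.1 hb.2) (ae_restrict_Icc_zero_one_nonneg hω0)] with s hs hs0
        rw [mul_comm (g b)]
        exact mul_le_mul_of_nonneg_left (hg ⟨ha.1.trans hs.1, hs.2.trans hb.2⟩ hb hs.2) hs0
    _ = wHat (fun s => ω s * g s) a - wHat (fun s => ω s * g s) b :=
        (wHat_sub_wHat hνi ha hb).symm
    _ ≤ wHat (fun s => ω s * g s) a := sub_le_self _ (wHat_nonneg hν0 hνi hb)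

lemma sub_one_mul_le_mul_wHat_mul (hω0 : ∀ s ∈ Ico (0:ℝ) 1, 0 ≤ ω s)
    (hωi : IntegrableOn ω (Ico 0 1)) (hg : AntitoneOn g (Icc 0 1))
    (hg0 : ∀ s ∈ Icc (0:ℝ) 1, 0 ≤ g s) {k C : ℝ} (hk : 1 ≤ k) (hC : 0 ≤ C)
    (hωC : ∀ r ∈ Ico (0:ℝ) 1, wHat ω r ≥ C * wHat ω (1 - (1 - r) / k))
    {r : ℝ} (hr : r ∈ Ico (0:ℝ) 1) :
    (C - 1) * (g (1 - (1 - r) / k) * wHat ω r) ≤ C * wHat (fun s => ω s * g s) r := by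
  set t := 1 - (1 - r) / k
  have ht := Ico_subset_Icc_self (one_sub_div_mem_Ico hr hk)
  have hgt := hg0 t ht
  have hlower := mul_wHat_sub_le_wHat_mul hω0 hωi hg hg0 (Ico_subset_Icc_self hr) ht
    (le_one_sub_div hr.2.le hk)
  calc (C - 1) * (g t * wHat ω r) ≤ C * (g t * (wHat ω r - wHat ω t)) := by
        nlinarith [mul_le_mul_of_nonneg_left (hωC r hr) hgt]
    _ ≤ C * wHat (fun s => ω s * g s) r := mul_le_mul_of_nonneg_left hlower hC

theorem Dcheck.mul_antitoneOn (hω0 : ∀ s ∈ Ico (0:ℝ) 1, 0 ≤ ω s)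
    (hωi : IntegrableOn ω (Ico 0 1)) (hω : Dcheck ω) (hg : AntitoneOn g (Icc 0 1))
    (hg0 : ∀ s ∈ Icc (0:ℝ) 1, 0 ≤ g s) : Dcheck (fun r => ω r * g r) := by
  obtain ⟨k, hk, C, hC, hωC⟩ := hω.exists_two_lt
  refine ⟨k, hk, C - 1, by linarith, fun r hr => ?_⟩
  set t := 1 - (1 - r) / k
  have ht := Ico_subset_Icc_self (one_sub_div_mem_Ico hr hk.le)
  have hνt := wHat_mul_le hω0 hωi hg ht
  have hνr := sub_one_mul_le_mul_wHat_mul hω0 hωi hg hg0 hk.le (by linarith) hωC hr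
  have key : C * ((C - 1) * wHat (fun s => ω s * g s) t) ≤ C * wHat (fun s => ω s * g s) r :=
    calc C * ((C - 1) * wHat (fun s => ω s * g s) t)
        ≤ (C - 1) * (g t * (C * wHat ω t)) := by
          nlinarith [mul_le_mul_of_nonneg_left hνt (by nlinarith : 0 ≤ C * (C - 1))]
      _ ≤ (C - 1) * (g t * wHat ω r) := by
          gcongr
          · linarith
          · exact hg0 t ht
          · exact hωC r hr
      _ ≤ C * wHat (fun s => ω s * g s) r := hνr
  exact le_of_mul_le_mul_left key (by linarith)

theorem Dclass.dhat_mul_antitoneOn (hω0 : ∀ s ∈ Ico (0:ℝ) 1, 0 ≤ ω s)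
    (hωi : IntegrableOn ω (Ico 0 1)) (hω : Dclass ω) (hg : AntitoneOn g (Icc 0 1))
    (hg0 : ∀ s ∈ Icc (0:ℝ) 1, 0 ≤ g s) (hgD : IsDoublingNearOne g) :
    Dhat (fun r => ω r * g r) := by
  obtain ⟨⟨A, hA, hωA⟩, hωk⟩ := hω
  obtain ⟨k, hk, C, hC, hωC⟩ := hωk.exists_two_lt
  obtain ⟨B, hB, hgB⟩ := hgD (2 * k) (by linarith)
  refine ⟨B * A * C, by nlinarith [mul_le_mul hB hA.le zero_le_one (by linarith)], ?_⟩
  intro r hr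
  have hm : (1 + r) / 2 ∈ Ico (0:ℝ) 1 := ⟨by linarith [hr.1], by linarith [hr.2]⟩
  set m := (1 + r) / 2
  set t := 1 - (1 - m) / k
  have ht : t = 1 - (1 - r) / (2 * k) := by
    simp only [t, m]
    field_simp
    ring
  have hgt : 0 ≤ g t := hg0 t (Ico_subset_Icc_self (one_sub_div_mem_Ico hm hk.le))
  have hωm := wHat_nonneg hω0 hωi (Ico_subset_Icc_self hm)
  have hBA : 0 ≤ B * A := by positivity
  have hνm := sub_one_mul_le_mul_wHat_mul hω0 hωi hg hg0 hk.le (by linarith) hωC hm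
  calc wHat (fun s => ω s * g s) r ≤ g r * wHat ω r :=
        wHat_mul_le hω0 hωi hg (Ico_subset_Icc_self hr)
    _ ≤ (B * g t) * (A * wHat ω m) :=
        mul_le_mul (ht ▸ hgB r hr) (hωA r hr) (wHat_nonneg hω0 hωi (Ico_subset_Icc_self hr))
          (by positivity)
    _ = B * A * (g t * wHat ω m) := by ring
    _ ≤ B * A * ((C - 1) * (g t * wHat ω m)) :=
        mul_le_mul_of_nonneg_left (le_mul_of_one_le_left (mul_nonneg hgt hωm) (by linarith)) hBA
    _ ≤ B * A * (C * wHat (fun s => ω s * g s) m) := mul_le_mul_of_nonneg_left hνm hBA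
    _ = B * A * C * wHat (fun s => ω s * g s) m := by ring

end AntitoneMultiplier

/-- **Lemma (ii).** If `ω ∈ D`, `μ ∈ D̂` and `0 < p < ∞`, then the radial weight
`ν(r) = ω(r) μ̂(r)^p` belongs to `D`. -/
theorem Dclass_mul_wHat_rpow (ω μ : ℝ → ℝ) (hω : IsRadialWeight ω)
    (hμ : IsRadialWeight μ) (hωD : Dclass ω) (hμD : Dhat μ) (p : ℝ) (hp : 0 < p) :
    Dclass (fun r => ω r * wHat μ r ^ p) := by
  obtain ⟨hω0, hωi, -⟩ := hω
  obtain ⟨hμ0, hμi, -⟩ := hμ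
  have hg0 : ∀ r ∈ Icc (0:ℝ) 1, 0 ≤ wHat μ r ^ p := fun r hr =>
    Real.rpow_nonneg (wHat_nonneg hμ0 hμi hr) p
  have hg : AntitoneOn (fun r => wHat μ r ^ p) (Icc 0 1) := fun a ha b hb hab =>
    Real.rpow_le_rpow (wHat_nonneg hμ0 hμi hb) (antitoneOn_wHat hμ0 hμi ha hb hab) hp.le
  have hgD : IsDoublingNearOne (fun r => wHat μ r ^ p) :=
    (hμD.isDoublingNearOne_wHat hμ0 hμi).rpow
      (fun r hr => wHat_nonneg hμ0 hμi (Ico_subset_Icc_self hr)) hp.le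
  exact ⟨hωD.dhat_mul_antitoneOn hω0 hωi hg hg0 hgD, hωD.2.mul_antitoneOn hω0 hωi hg hg0⟩
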